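/- arXiv:2210.12159 — 2 statements merged into one kernel-verified Lean document; each statement's English description precedes it below -/
import Mathlib

section
/- For every positive integer n and all integers s and j, 2 * ∑_{k=0}^{n-1} C(2n-1, 2k) * F(j(4k+s)) = (-1)^j * (L(j)^(2n-1) * F(j(2n+s-1)) - 5^(n-1) * F(j)^(2n-1) * L(j(2n+s-1))). -/
/-! Binet: `√5 F t = φ ^ t - ψ ^ t` and `L t = φ ^ t + ψ ^ t`. Put `A = φ ^ j`, `B = ψ ^ j`,
`e = A B = (-1) ^ j` and `m = 2n - 1`. By the binomial theorem, `√5` times the left side is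
`A ^ s ((1 + A²) ^ m + (1 - A²) ^ m) - B ^ s ((1 + B²) ^ m + (1 - B²) ^ m)`. Since `A⁻¹ = e B`,
`1 ± A² = A (e B ± A)`, so the first bracket is `e A ^ m ((A + B) ^ m - (A - B) ^ m)` and
symmetrically for `B`; here `A + B = L j` and `A - B = √5 F j`. -/

open Finset Real goldenRatio

theorem eq_of_fib_recurrence {R : Type*} [AddCommGroup R] {G H : ℤ → R}
    (hG : ∀ j, G j = G (j - 1) + G (j - 2)) (hH : ∀ j, H j = H (j - 1) + H (j - 2))
    (h0 : G 0 = H 0) (h1 : G 1 = H 1) (j : ℤ) : G j = H j := by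
  suffices ∀ j : ℤ, G j = H j ∧ G (j + 1) = H (j + 1) from (this j).1
  intro j
  induction j using Int.induction_on with
  | zero => exact ⟨h0, by simpa using h1⟩
  | succ i ih =>
    refine ⟨ih.2, ?_⟩
    have hGi := hG (i + 1 + 1)
    have hHi := hH (i + 1 + 1)
    simp only [add_sub_cancel_right, show (i : ℤ) + 1 + 1 - 2 = i by ring] at hGi hHi
    rw [hGi, hHi, ih.1, ih.2]
  | pred i ih =>
    refine ⟨?_, by simpa using ih.1⟩
    have hGi := hG (-i + 1)
    have hHi := hH (-i + 1)
    simp only [add_sub_cancel_right, show -(i : ℤ) + 1 - 2 = -i - 1 by ring] at hGi hHi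
    rw [eq_sub_of_add_eq' hGi.symm, eq_sub_of_add_eq' hHi.symm, ih.1, ih.2]

theorem zpow_eq_zpow_sub_one_add_zpow_sub_two {K : Type*} [DivisionRing K] {x : K}
    (hx : x ^ 2 = x + 1) (j : ℤ) : x ^ j = x ^ (j - 1) + x ^ (j - 2) := by
  have hx0 : x ≠ 0 := by rintro rfl; simp at hx
  calc x ^ j = x ^ (j - 2) * x ^ 2 := by rw [← zpow_natCast, ← zpow_add₀ hx0]; ring_nf
    _ = x ^ (j - 2) * x + x ^ (j - 2) := by rw [hx, mul_add, mul_one]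
    _ = x ^ (j - 1) + x ^ (j - 2) := by rw [← zpow_add_one₀ hx0]; ring_nf

theorem zpow_mul_natCast_add {K : Type*} [DivisionRing K] {x : K} (hx : x ≠ 0) (j : ℤ) (a : ℕ)
    (s : ℤ) : x ^ (j * (a + s)) = (x ^ j) ^ a * (x ^ j) ^ s := by
  rw [zpow_mul, zpow_add₀ (zpow_ne_zero j hx), zpow_natCast]

theorem sum_range_two_mul {M : Type*} [AddCommMonoid M] (f : ℕ → M) (n : ℕ) :
    ∑ i ∈ range (2 * n), f i = ∑ k ∈ range n, (f (2 * k) + f (2 * k + 1)) := by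
  induction n with
  | zero => simp
  | succ n ih => rw [mul_add_one, sum_range_succ, sum_range_succ, sum_range_succ, ih, add_assoc]

theorem one_add_pow_add_one_sub_pow {R : Type*} [CommRing R] {n : ℕ} (hn : 0 < n) (x : R) :
    (1 + x) ^ (2 * n - 1) + (1 - x) ^ (2 * n - 1)
      = 2 * ∑ k ∈ range n, ((2 * n - 1).choose (2 * k) : R) * x ^ (2 * k) := by
  have hm : 2 * n - 1 + 1 = 2 * n := by omega
  rw [add_comm 1 x, sub_eq_add_neg, add_comm 1 (-x), add_pow, add_pow, hm, ← sum_add_distrib,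
    sum_range_two_mul, mul_sum]
  refine sum_congr rfl fun k _ => ?_
  rw [Even.neg_pow ⟨k, by ring⟩, Odd.neg_pow ⟨k, by ring⟩]
  simp only [one_pow, mul_one]
  ring

theorem one_add_sq_pow_add_one_sub_sq_pow {R : Type*} [CommRing R] {A B e : R}
    (hAB : A * B = e) (he : e = 1 ∨ e = -1) {m : ℕ} (hm : Odd m) :
    (1 + A ^ 2) ^ m + (1 - A ^ 2) ^ m = e * A ^ m * ((A + B) ^ m - (A - B) ^ m) := by
  rcases he with rfl | rfl
  · rw [show 1 + A ^ 2 = A * (A + B) by linear_combination -hAB,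
      show 1 - A ^ 2 = -(A * (A - B)) by linear_combination -hAB, hm.neg_pow, mul_pow, mul_pow]
    ring
  · rw [show 1 + A ^ 2 = A * (A - B) by linear_combination hAB,
      show 1 - A ^ 2 = -(A * (A + B)) by linear_combination hAB, hm.neg_pow, mul_pow, mul_pow]
    ring

theorem two_mul_sum_choose_mul_pow_four_mul {R : Type*} [CommRing R] {A B e : R}
    (hAB : A * B = e) (he : e = 1 ∨ e = -1) {n : ℕ} (hn : 0 < n) (u v : R) :
    2 * ∑ k ∈ range n, ((2 * n - 1).choose (2 * k) : R) * (A ^ (4 * k) * u - B ^ (4 * k) * v)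
      = e * ((A + B) ^ (2 * n - 1) * (A ^ (2 * n - 1) * u - B ^ (2 * n - 1) * v)
          - (A - B) ^ (2 * n - 1) * (A ^ (2 * n - 1) * u + B ^ (2 * n - 1) * v)) := by
  have hm : Odd (2 * n - 1) := ⟨n - 1, by omega⟩
  have hsum (x w : R) :
      2 * ∑ k ∈ range n, ((2 * n - 1).choose (2 * k) : R) * (x ^ (4 * k) * w)
        = w * ((1 + x ^ 2) ^ (2 * n - 1) + (1 - x ^ 2) ^ (2 * n - 1)) := by
    rw [one_add_pow_add_one_sub_pow hn, mul_sum, mul_sum, mul_sum]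
    refine sum_congr rfl fun k _ => ?_
    rw [← pow_mul]
    ring
  simp only [mul_sub, sum_sub_distrib, hsum, one_add_sq_pow_add_one_sub_sq_pow hAB he hm,
    one_add_sq_pow_add_one_sub_sq_pow ((mul_comm B A).trans hAB) he hm, hm.neg_pow,
    show B - A = -(A - B) by ring, add_comm B A]
  ring

theorem goldenRatio_zpow_mul_goldenConj_zpow (j : ℤ) : φ ^ j * ψ ^ j = (-1) ^ j.natAbs := by
  rw [← mul_zpow, goldenRatio_mul_goldenConj]
  rcases j.even_or_odd with hj | hj
  · rw [hj.neg_one_zpow, (Int.natAbs_even.2 hj).neg_one_pow]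
  · rw [hj.neg_one_zpow, (Int.natAbs_odd.2 hj).neg_one_pow]

theorem eq_intFib_of_fib_recurrence {F : ℤ → ℤ} (hF0 : F 0 = 0) (hF1 : F 1 = 1)
    (hF : ∀ j : ℤ, F j = F (j - 1) + F (j - 2)) : F = Int.fib :=
  funext <| eq_of_fib_recurrence hF
    (fun j ↦ by have h := Int.fib_add_two (j - 2); ring_nf at h ⊢; rw [h, add_comm])
    (by simpa) (by simpa)

theorem coe_mul_sqrt_five_eq_of_fib_recurrence {F : ℤ → ℤ} (hF0 : F 0 = 0) (hF1 : F 1 = 1)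
    (hF : ∀ j : ℤ, F j = F (j - 1) + F (j - 2)) (j : ℤ) : (F j : ℝ) * √5 = φ ^ j - ψ ^ j := by
  rw [eq_intFib_of_fib_recurrence hF0 hF1 hF, coe_intFib_eq, div_mul_cancel₀ _ (by positivity)]

theorem coe_eq_of_lucas_recurrence {L : ℤ → ℤ} (hL0 : L 0 = 2) (hL1 : L 1 = 1)
    (hL : ∀ j : ℤ, L j = L (j - 1) + L (j - 2)) (j : ℤ) : (L j : ℝ) = φ ^ j + ψ ^ j := by
  refine eq_of_fib_recurrence (G := fun t ↦ (L t : ℝ)) (H := fun t ↦ φ ^ t + ψ ^ t)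
    (fun t ↦ by exact_mod_cast hL t) (fun t ↦ ?_) (by norm_num [hL0]) (by simp [hL1]) j
  rw [zpow_eq_zpow_sub_one_add_zpow_sub_two goldenRatio_sq t,
    zpow_eq_zpow_sub_one_add_zpow_sub_two goldenConj_sq t]
  ring

theorem stmt6 (F : ℤ → ℤ) (hF0 : F 0 = 0) (hF1 : F 1 = 1)
    (hF : ∀ j : ℤ, F j = F (j - 1) + F (j - 2)) (L : ℤ → ℤ) (hL0 : L 0 = 2) (hL1 : L 1 = 1)
    (hL : ∀ j : ℤ, L j = L (j - 1) + L (j - 2)) (n : ℕ) (hn : 0 < n) (s j : ℤ) :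
    2 * ∑ k ∈ Finset.range n, ((2 * n - 1).choose (2 * k) : ℤ) * F (j * (4 * (k : ℤ) + s))
      = (-1 : ℤ) ^ j.natAbs *
        (L j ^ (2 * n - 1) * F (j * (2 * (n : ℤ) + s - 1))
          - 5 ^ (n - 1) * F j ^ (2 * n - 1) * L (j * (2 * (n : ℤ) + s - 1))) := by
  have hF' := coe_mul_sqrt_five_eq_of_fib_recurrence hF0 hF1 hF
  have hL' := coe_eq_of_lucas_recurrence hL0 hL1 hL
  set t := j * (2 * (n : ℤ) + s - 1) with ht
  have ht' : t = j * (((2 * n - 1 : ℕ) : ℤ) + s) := by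
    rw [ht]; push_cast [Nat.cast_sub (by omega : 1 ≤ 2 * n)]; ring
  have h5 : √5 ^ (2 * n - 1) = 5 ^ (n - 1) * √5 := by
    rw [show 2 * n - 1 = 2 * (n - 1) + 1 by omega, pow_succ, pow_mul, sq_sqrt (by norm_num)]
  apply Int.cast_injective (α := ℝ)
  refine mul_right_cancel₀ (by positivity : √5 ≠ 0) ?_
  push_cast
  calc (2 * ∑ k ∈ range n, ((2 * n - 1).choose (2 * k) : ℝ) * (F (j * (4 * k + s)) : ℝ)) * √5
      = 2 * ∑ k ∈ range n, ((2 * n - 1).choose (2 * k) : ℝ) *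
          ((φ ^ j) ^ (4 * k) * (φ ^ j) ^ s - (ψ ^ j) ^ (4 * k) * (ψ ^ j) ^ s) := by
        rw [mul_assoc, sum_mul]
        refine congrArg _ (sum_congr rfl fun k _ => ?_)
        rw [mul_assoc, hF', ← zpow_mul_natCast_add goldenRatio_ne_zero,
          ← zpow_mul_natCast_add goldenConj_ne_zero]
        push_cast; rfl
    _ = (-1) ^ j.natAbs * ((φ ^ j + ψ ^ j) ^ (2 * n - 1) * (φ ^ t - ψ ^ t)
          - (φ ^ j - ψ ^ j) ^ (2 * n - 1) * (φ ^ t + ψ ^ t)) := by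
        rw [two_mul_sum_choose_mul_pow_four_mul (goldenRatio_zpow_mul_goldenConj_zpow j)
          (neg_one_pow_eq_or ℝ _) hn, ht', zpow_mul_natCast_add goldenRatio_ne_zero,
          zpow_mul_natCast_add goldenConj_ne_zero]
    _ = _ := by
        rw [← hF', ← hF', ← hL', ← hL', mul_pow, h5]
        ring
end

section
/- For every positive integer n, 2 * ∑_{k=1}^{n} C(2n-1, 2k-1) * F(2k-1) equals F(2n-1)*L(n-1)*L(n) if n is odd, and equals 5*F(2n-1)*F(n-1)*F(n) if n is even. -/
/-!
In Binet form `F k = (φ^k - ψ^k)/√5`, `L k = φ^k + ψ^k`, twice the odd part of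
`∑ C(m,k) x^k` is `(1 + x)^m - (1 - x)^m`, and `1 + φ = φ²`, `1 - φ = ψ` (and symmetrically
for `ψ`). Hence twice the sum equals `F (2m) + F m = F m * (L m + 1)` with `m = 2n - 1`.
Since `φψ = -1`, `L (n-1) * L n = L m + (-1)^(n-1)` and `5 * F (n-1) * F n = L m - (-1)^(n-1)`,
and for the respective parity of `n` both equal `L m + 1`.
-/

open Finset Real goldenRatio

theorem eq_of_fib_recurrence_s8 {R : Type*} [Add R] {f g : ℕ → R} (h0 : f 0 = g 0)
    (h1 : f 1 = g 1) (hf : ∀ n, f (n + 2) = f (n + 1) + f n)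
    (hg : ∀ n, g (n + 2) = g (n + 1) + g n) : f = g := by
  funext n
  induction n using Nat.twoStepInduction with
  | zero => exact h0
  | one => exact h1
  | more n ih ih' => rw [hf, hg, ih, ih']

theorem goldenRatio_pow_add_two (n : ℕ) : φ ^ (n + 2) = φ ^ (n + 1) + φ ^ n := by
  rw [pow_add, goldenRatio_sq]; ring

theorem goldenConj_pow_add_two (n : ℕ) : ψ ^ (n + 2) = ψ ^ (n + 1) + ψ ^ n := by
  rw [pow_add, goldenConj_sq]; ring

theorem two_mul_sum_Icc_odd {R : Type*} [CommRing R] (f : ℕ → R) (n : ℕ) :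
    2 * ∑ j ∈ Icc 1 n, f (2 * j - 1) = ∑ k ∈ range (2 * n), (1 - (-1) ^ k) * f k := by
  induction n with
  | zero => simp
  | succ n ih =>
    rw [sum_Icc_succ_top (by omega), mul_add, ih, show 2 * (n + 1) = 2 * n + 1 + 1 by ring,
      sum_range_succ, sum_range_succ, Nat.add_sub_cancel, pow_succ,
      (even_two_mul n).neg_one_pow]
    ring

theorem sum_range_choose_mul_one_sub_neg_one_pow_mul_pow {R : Type*} [CommRing R] (x : R)
    (m : ℕ) : ∑ k ∈ range (m + 1), (1 - (-1) ^ k) * (m.choose k * x ^ k) =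
      (1 + x) ^ m - (1 - x) ^ m := by
  rw [show 1 + x = x + 1 by ring, show 1 - x = -x + 1 by ring, add_pow, add_pow,
    ← sum_sub_distrib]
  refine sum_congr rfl fun k _ => ?_
  rw [neg_pow]; ring

theorem two_mul_sum_choose_odd_mul_fib (a : ℕ) :
    2 * ∑ j ∈ Icc 1 (a + 1), (2 * a + 1).choose (2 * j - 1) * Nat.fib (2 * j - 1) =
      Nat.fib (2 * (2 * a + 1)) + Nat.fib (2 * a + 1) := by
  set m := 2 * a + 1
  apply Nat.cast_injective (R := ℝ)
  push_cast
  calc 2 * ∑ j ∈ Icc 1 (a + 1), (m.choose (2 * j - 1) : ℝ) * Nat.fib (2 * j - 1)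
      = ∑ k ∈ range (m + 1), (1 - (-1) ^ k) * ((m.choose k : ℝ) * Nat.fib k) := by
        rw [two_mul_sum_Icc_odd (fun k => (m.choose k : ℝ) * Nat.fib k)]; rfl
    _ = (∑ k ∈ range (m + 1), (1 - (-1) ^ k) * (m.choose k * φ ^ k) -
          ∑ k ∈ range (m + 1), (1 - (-1) ^ k) * (m.choose k * ψ ^ k)) / √5 := by
        rw [sub_div, sum_div, sum_div, ← sum_sub_distrib]
        refine sum_congr rfl fun k _ => ?_
        rw [coe_fib_eq]; ring
    _ = ((φ ^ 2) ^ m - ψ ^ m - ((ψ ^ 2) ^ m - φ ^ m)) / √5 := by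
        rw [sum_range_choose_mul_one_sub_neg_one_pow_mul_pow,
          sum_range_choose_mul_one_sub_neg_one_pow_mul_pow, goldenRatio_sq, goldenConj_sq,
          one_sub_goldenConj, one_sub_goldenRatio, add_comm φ, add_comm ψ]
    _ = Nat.fib (2 * m) + Nat.fib m := by
        rw [coe_fib_eq, coe_fib_eq, pow_mul, pow_mul]; ring

theorem lucas_eq_binet {L : ℕ → ℤ} (hL0 : L 0 = 2) (hL1 : L 1 = 1)
    (hL : ∀ n, L (n + 2) = L (n + 1) + L n) (n : ℕ) : (L n : ℝ) = φ ^ n + ψ ^ n := by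
  have := eq_of_fib_recurrence_s8 (f := fun n => (L n : ℝ)) (g := fun n => φ ^ n + ψ ^ n)
    (by simp [hL0]; norm_num) (by simp [hL1]) (fun n => by simp [hL]) (fun n => by
      simp only [goldenRatio_pow_add_two, goldenConj_pow_add_two]; ring)
  exact congrFun this n

theorem goldenRatio_pow_mul_goldenConj_pow (a : ℕ) : φ ^ a * ψ ^ a = (-1) ^ a := by
  rw [← mul_pow, goldenRatio_mul_goldenConj]

theorem fib_two_mul_add_fib (m : ℕ) :
    (Nat.fib (2 * m) + Nat.fib m : ℝ) = Nat.fib m * (φ ^ m + ψ ^ m + 1) := by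
  rw [coe_fib_eq, coe_fib_eq]; ring

theorem binet_lucas_mul_lucas_succ (a : ℕ) :
    (φ ^ a + ψ ^ a) * (φ ^ (a + 1) + ψ ^ (a + 1)) =
      φ ^ (2 * a + 1) + ψ ^ (2 * a + 1) + (-1) ^ a := by
  linear_combination (φ + ψ) * goldenRatio_pow_mul_goldenConj_pow a +
    (-1) ^ a * goldenRatio_add_goldenConj

theorem five_mul_fib_mul_fib_succ (a : ℕ) :
    5 * Nat.fib a * Nat.fib (a + 1) = φ ^ (2 * a + 1) + ψ ^ (2 * a + 1) - (-1) ^ a := by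
  calc 5 * (Nat.fib a : ℝ) * Nat.fib (a + 1)
      = (φ ^ a - ψ ^ a) * (φ ^ (a + 1) - ψ ^ (a + 1)) * (5 / √5 ^ 2) := by
        rw [coe_fib_eq, coe_fib_eq]; ring
    _ = _ := by
        rw [Real.sq_sqrt (by norm_num), div_self (by norm_num), mul_one]
        linear_combination -(φ + ψ) * goldenRatio_pow_mul_goldenConj_pow a -
          (-1) ^ a * goldenRatio_add_goldenConj

theorem stmt8 (F : ℕ → ℤ) (hF0 : F 0 = 0) (hF1 : F 1 = 1)
    (hF : ∀ n : ℕ, F (n + 2) = F (n + 1) + F n) (L : ℕ → ℤ) (hL0 : L 0 = 2) (hL1 : L 1 = 1)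
    (hL : ∀ n : ℕ, L (n + 2) = L (n + 1) + L n) (n : ℕ) (hn : 0 < n) :
    (Odd n → 2 * ∑ k ∈ Finset.Icc 1 n, ((2 * n - 1).choose (2 * k - 1) : ℤ) * F (2 * k - 1)
        = F (2 * n - 1) * L (n - 1) * L n) ∧
    (Even n → 2 * ∑ k ∈ Finset.Icc 1 n, ((2 * n - 1).choose (2 * k - 1) : ℤ) * F (2 * k - 1)
        = 5 * F (2 * n - 1) * F (n - 1) * F n) := by
  obtain ⟨a, rfl⟩ : ∃ a, n = a + 1 := ⟨n - 1, by omega⟩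
  obtain rfl : F = fun k => (Nat.fib k : ℤ) :=
    eq_of_fib_recurrence_s8 (by simp [hF0]) (by simp [hF1]) hF fun k => by
      push_cast [Nat.fib_add_two]; ring
  have hsum := congrArg (Nat.cast : ℕ → ℤ) (two_mul_sum_choose_odd_mul_fib a)
  push_cast at hsum
  simp only [show 2 * (a + 1) - 1 = 2 * a + 1 by omega, Nat.add_sub_cancel, hsum]
  refine ⟨fun hodd => ?_, fun heven => ?_⟩
  · have ha : Even a := by simpa [parity_simps] using hodd
    apply Int.cast_injective (α := ℝ)
    push_cast
    rw [fib_two_mul_add_fib, lucas_eq_binet hL0 hL1 hL, lucas_eq_binet hL0 hL1 hL,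
      mul_assoc, binet_lucas_mul_lucas_succ, ha.neg_one_pow]
  · have ha : Odd a := by simpa [parity_simps] using heven
    apply Int.cast_injective (α := ℝ)
    push_cast
    rw [fib_two_mul_add_fib, mul_comm 5, mul_assoc, mul_assoc, ← mul_assoc 5,
      five_mul_fib_mul_fib_succ, ha.neg_one_pow]
    ring
end
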